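/- arXiv:2306.09809 — 2 statements merged into one kernel-verified Lean document; each statement's English description precedes it below -/
import Mathlib

section
/- Let I be an independent family of subsets of ℕ and let y ⊆ ℕ have infinite intersection with every Boolean combination I^h. Then for every h ∈ FF(I) and every Z ∈ fil(I), the set y ∩ I^h ∩ Z is infinite. -/
open Set

/-- A family of subsets of ℕ is *independent* if all its members are infinite and
for all finite disjoint subfamilies `𝒜, ℬ ⊆ I` the set `⋂ 𝒜 \ ⋃ ℬ` is infinite. -/
def Indep (I : Set (Set ℕ)) : Prop :=
  (∀ A ∈ I, A.Infinite) ∧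
  ∀ 𝒜 ℬ : Finset (Set ℕ), ↑𝒜 ⊆ I → ↑ℬ ⊆ I → Disjoint 𝒜 ℬ →
    ((⋂ A ∈ 𝒜, A) \ (⋃ B ∈ ℬ, B)).Infinite

/-- `FF I h` : `h` is a finite partial function from `I` to `2`, coded as a finitely
supported `Option Bool`-valued function whose support consists of members of `I`. -/
def FF (I : Set (Set ℕ)) (h : Set ℕ → Option Bool) : Prop :=
  {A | h A ≠ none}.Finite ∧ ∀ A : Set ℕ, h A ≠ none → A ∈ I

/-- The Boolean combination `I^h` : intersection over the domain of `h` of `A` (if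
`h A = some false`, i.e. `h(A) = 0`) or of its complement (if `h A = some true`). -/
def BC (h : Set ℕ → Option Bool) : Set ℕ :=
  ⋂ A ∈ {A : Set ℕ | h A ≠ none}, (if h A = some false then A else Aᶜ)

/-- `ExtFF h h'` : the finite partial function `h'` extends `h`. -/
def ExtFF (h h' : Set ℕ → Option Bool) : Prop :=
  ∀ (A : Set ℕ) (b : Bool), h A = some b → h' A = some b

/-- `I` is densely maximal: for every infinite `X ⊆ ℕ` and every `h ∈ FF(I)` there is
`h' ⊇ h` in `FF(I)` with `I^{h'} \ X` finite or `I^{h'} ∩ X` finite. -/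
def DenselyMax (I : Set (Set ℕ)) : Prop :=
  ∀ X : Set ℕ, X.Infinite → ∀ h, FF I h →
    ∃ h', FF I h' ∧ ExtFF h h' ∧ ((BC h' \ X).Finite ∨ (BC h' ∩ X).Finite)

/-- The density filter `fil(I)`. -/
def densityFil (I : Set (Set ℕ)) : Set (Set ℕ) :=
  {X | ∀ h, FF I h → ∃ h', FF I h' ∧ ExtFF h h' ∧ (BC h' \ X).Finite}

/-- `I` is a maximal independent family. -/
def MaxIndep (I : Set (Set ℕ)) : Prop :=
  Indep I ∧ ¬ ∃ X : Set ℕ, X.Infinite ∧ X ∉ I ∧ Indep (insert X I)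

/-- A proper filter on ℕ, viewed as a collection of subsets of ℕ. -/
def ProperFilter (F : Set (Set ℕ)) : Prop :=
  ∅ ∉ F ∧ Set.univ ∈ F ∧ (∀ X ∈ F, ∀ Y : Set ℕ, X ⊆ Y → Y ∈ F) ∧
    ∀ X ∈ F, ∀ Y ∈ F, X ∩ Y ∈ F

/-- Every member of `F` has infinite intersection with every Boolean combination of `I`. -/
def DiagProp (I : Set (Set ℕ)) (F : Set (Set ℕ)) : Prop :=
  ∀ X ∈ F, ∀ h, FF I h → (X ∩ BC h).Infinite

/-- `F` is a diagonalization filter for `I` : a proper filter, maximal under inclusion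
among proper filters all of whose members meet every Boolean combination infinitely. -/
def DiagFilter (I F : Set (Set ℕ)) : Prop :=
  ProperFilter F ∧ DiagProp I F ∧
    ∀ G : Set (Set ℕ), ProperFilter G → DiagProp I G → F ⊆ G → G = F

/-- `F` is a P-filter (as a collection of sets): every countable subfamily has a
pseudointersection in `F`. -/
def IsPFilter (F : Set (Set ℕ)) : Prop :=
  ∀ A : ℕ → Set ℕ, (∀ n, A n ∈ F) → ∃ B ∈ F, ∀ n, (B \ A n).Finite

/-- `F` is a Q-filter: every partition of ℕ into finite sets has a semiselector in `F`. -/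
def IsQFilter (F : Set (Set ℕ)) : Prop :=
  ∀ J : ℕ → Set ℕ, (∀ n, (J n).Finite) → (∀ m n, m ≠ n → Disjoint (J m) (J n)) →
    (⋃ n, J n) = Set.univ → ∃ A ∈ F, ∀ n, (A ∩ J n).Subsingleton

/-- An independent family is selective if it is densely maximal and its density filter
is Ramsey (both a P-filter and a Q-filter). -/
def Selective (I : Set (Set ℕ)) : Prop :=
  Indep I ∧ DenselyMax I ∧ IsPFilter (densityFil I) ∧ IsQFilter (densityFil I)

lemma BC_mono {h h' : Set ℕ → Option Bool} (he : ExtFF h h') : BC h' ⊆ BC h := by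
  intro x hx
  simp only [BC, Set.mem_iInter] at hx ⊢
  intro A hA
  match hb : h A with
  | none => exact absurd hb hA
  | some b =>
    have h'A := he A b hb
    have := hx A (by simp [h'A])
    rw [h'A] at this
    exact this

theorem statement4 (I : Set (Set ℕ)) (hI : Indep I) (y : Set ℕ)
    (hy : ∀ h, FF I h → (y ∩ BC h).Infinite) :
    ∀ h, FF I h → ∀ Z ∈ densityFil I, (y ∩ BC h ∩ Z).Infinite := by
  intro h hh Z hZ
  obtain ⟨h', hh', he, hfin⟩ := hZ h hh
  have hinf := hy h' hh'
  have : (y ∩ BC h' ∩ Z).Infinite := by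
    have : y ∩ BC h' ⊆ (BC h' \ Z) ∪ (y ∩ BC h' ∩ Z) := by
      intro x ⟨hx1, hx2⟩
      by_cases hxZ : x ∈ Z
      · exact Or.inr ⟨⟨hx1, hx2⟩, hxZ⟩
      · exact Or.inl ⟨hx2, hxZ⟩
    rcases Set.infinite_union.mp (hinf.mono this) with H | H
    · exact absurd H hfin.not_infinite
    · exact H
  exact this.mono (fun x hx => ⟨⟨hx.1.1, BC_mono he hx.1.2⟩, hx.2⟩)
end

section
/- Let I be an independent family of subsets of ℕ. Then I is densely maximal if and only if fil(I) is the unique diagonalization filter for I (that is, fil(I) is a diagonalization filter for I and every diagonalization filter for I equals fil(I)). -/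
open Set

section AuxStatement6

variable {I : Set (Set ℕ)}

lemma extFF_refl' (h : Set ℕ → Option Bool) : ExtFF h h := fun _ _ hb => hb

lemma extFF_trans' {h1 h2 h3 : Set ℕ → Option Bool} (a : ExtFF h1 h2) (b : ExtFF h2 h3) :
    ExtFF h1 h3 := fun A c hc => b A c (a A c hc)

lemma mem_BC' {h : Set ℕ → Option Bool} {x : ℕ} :
    x ∈ BC h ↔ ∀ A : Set ℕ, h A ≠ none → x ∈ (if h A = some false then A else Aᶜ) := by
  simp [BC]

lemma BC_anti' {h h' : Set ℕ → Option Bool} (hext : ExtFF h h') : BC h' ⊆ BC h := by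
  intro x hx
  rw [mem_BC'] at hx ⊢
  intro A hA
  obtain ⟨b, hb⟩ : ∃ b, h A = some b := by
    cases hc : h A with
    | none => exact absurd hc hA
    | some b => exact ⟨b, rfl⟩
  have hb' := hext A b hb
  have hx' := hx A (by simp [hb'])
  rw [hb'] at hx'
  rw [hb]
  cases b with
  | false => simpa using hx'
  | true => simpa using hx'

lemma FF_none' : FF I (fun _ => none) := by
  constructor
  · simp
  · simp

lemma BC_infinite' (hI : Indep I) {h : Set ℕ → Option Bool} (hh : FF I h) :
    (BC h).Infinite := by
  classical
  obtain ⟨hfin, hmem⟩ := hh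
  set 𝒜 : Finset (Set ℕ) := hfin.toFinset.filter (fun A => h A = some false) with h𝒜
  set ℬ : Finset (Set ℕ) := hfin.toFinset.filter (fun A => h A = some true) with hℬ
  have hsubA : ↑𝒜 ⊆ I := by
    intro A hA
    simp only [h𝒜, Finset.coe_filter, Set.mem_setOf_eq, Set.Finite.mem_toFinset] at hA
    exact hmem A hA.1
  have hsubB : ↑ℬ ⊆ I := by
    intro A hA
    simp only [hℬ, Finset.coe_filter, Set.mem_setOf_eq, Set.Finite.mem_toFinset] at hA
    exact hmem A hA.1
  have hdisj : Disjoint 𝒜 ℬ := by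
    rw [Finset.disjoint_left]
    intro A hA hB
    simp only [h𝒜, hℬ, Finset.mem_filter] at hA hB
    rw [hA.2] at hB
    simp at hB
  have key := hI.2 𝒜 ℬ hsubA hsubB hdisj
  refine key.mono ?_
  intro x hx
  obtain ⟨hx1, hx2⟩ := hx
  simp only [Set.mem_iInter] at hx1
  simp only [Set.mem_iUnion, not_exists] at hx2
  rw [mem_BC']
  intro A hA
  by_cases hfA : h A = some false
  · rw [if_pos hfA]
    exact hx1 A (by simp [h𝒜, Finset.mem_filter, Set.Finite.mem_toFinset, hA, hfA])
  · rw [if_neg hfA]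
    have htA : h A = some true := by
      cases hc : h A with
      | none => exact absurd hc hA
      | some b =>
        cases b with
        | false => exact absurd hc hfA
        | true => rfl
    exact hx2 A (by simp [hℬ, Finset.mem_filter, Set.Finite.mem_toFinset, hA, htA])

lemma densityFil_proper' (hI : Indep I) : ProperFilter (densityFil I) := by
  refine ⟨?_, ?_, ?_, ?_⟩
  · intro hmem
    obtain ⟨h', hFF, -, hfin⟩ := hmem (fun _ => none) FF_none'
    rw [Set.diff_empty] at hfin
    exact (BC_infinite' hI hFF) hfin
  · intro h hh
    exact ⟨h, hh, extFF_refl' h, by simp⟩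
  · intro X hX Y hXY h hh
    obtain ⟨h', a, b, c⟩ := hX h hh
    exact ⟨h', a, b, c.subset (Set.diff_subset_diff_right hXY)⟩
  · intro X hX Y hY h hh
    obtain ⟨h1, a1, b1, c1⟩ := hX h hh
    obtain ⟨h2, a2, b2, c2⟩ := hY h1 a1
    refine ⟨h2, a2, extFF_trans' b1 b2, ?_⟩
    have hsub : BC h2 \ (X ∩ Y) ⊆ (BC h1 \ X) ∪ (BC h2 \ Y) := by
      rintro x ⟨hx, hnx⟩
      by_cases hxX : x ∈ X
      · exact Or.inr ⟨hx, fun hY' => hnx ⟨hxX, hY'⟩⟩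
      · exact Or.inl ⟨BC_anti' b2 hx, hxX⟩
    exact (c1.union c2).subset hsub

lemma densityFil_diag' (hI : Indep I) : DiagProp I (densityFil I) := by
  intro X hX h hh
  obtain ⟨h', a, b, c⟩ := hX h hh
  have hinf := (BC_infinite' hI a).diff c
  refine hinf.mono ?_
  rintro x ⟨hx1, hx2⟩
  refine ⟨?_, BC_anti' b hx1⟩
  by_contra hxX
  exact hx2 ⟨hx1, hxX⟩

lemma sub_densityFil' (hDM : DenselyMax I) {G : Set (Set ℕ)} (hG : DiagProp I G) :
    G ⊆ densityFil I := by
  intro X hX h hh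
  have hXinf : X.Infinite := (hG X hX (fun _ => none) FF_none').mono Set.inter_subset_left
  obtain ⟨h', a, b, c⟩ := hDM X hXinf h hh
  rcases c with c | c
  · exact ⟨h', a, b, c⟩
  · exact absurd (by rwa [Set.inter_comm] at c) (hG X hX h' a)

lemma denselyMax_of_max' (hI : Indep I)
    (hmax : ∀ G, ProperFilter G → DiagProp I G → densityFil I ⊆ G → G = densityFil I) :
    DenselyMax I := by
  classical
  by_contra hDM
  unfold DenselyMax at hDM
  push_neg at hDM
  obtain ⟨X, hXinf, h0, hFF0, hbad⟩ := hDM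
  set W : Set ℕ := (X ∩ BC h0)ᶜ with hW
  set G : Set (Set ℕ) := {Y | ∃ Z ∈ densityFil I, Z ∩ W ⊆ Y} with hGdef
  have key : ∀ Z ∈ densityFil I, ∀ h, FF I h → ((Z ∩ W) ∩ BC h).Infinite := by
    intro Z hZ h hh
    obtain ⟨h2, a2, b2, c2⟩ := hZ h hh
    by_cases hcompat : ∀ A b, h2 A = some b → h0 A = none ∨ h0 A = some b
    · -- compatible: merge h2 and h0
      set h3 : Set ℕ → Option Bool := fun A =>
        match h2 A with
        | some b => some b
        | none => h0 A with hh3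
      have hext23 : ExtFF h2 h3 := by
        intro A b hb
        simp [hh3, hb]
      have hext03 : ExtFF h0 h3 := by
        intro A b hb
        cases hc : h2 A with
        | none => simp [hh3, hc, hb]
        | some c =>
          rcases hcompat A c hc with h' | h'
          · rw [hb] at h'; exact absurd h' (by simp)
          · rw [hb] at h'
            simp only [Option.some.injEq] at h'
            simp [hh3, hc, h']
      have hFF3 : FF I h3 := by
        constructor
        · refine (a2.1.union hFF0.1).subset ?_
          intro A hA
          simp only [Set.mem_setOf_eq, hh3] at hA
          cases hc : h2 A with
          | none =>
            right
            simp only [Set.mem_setOf_eq]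
            rw [hc] at hA
            exact hA
          | some c => exact Or.inl (by simp [Set.mem_setOf_eq, hc])
        · intro A hA
          simp only [hh3] at hA
          cases hc : h2 A with
          | none =>
            rw [hc] at hA
            exact hFF0.2 A hA
          | some c => exact a2.2 A (by simp [hc])
      have hb3 := hbad h3 hFF3 hext03
      have hinf : ((BC h3 \ X) \ (BC h2 \ Z)).Infinite := (Set.Infinite.diff hb3.1 c2 : _)
      refine hinf.mono ?_
      rintro x ⟨⟨hx3, hxX⟩, hx2⟩
      have hxBC2 : x ∈ BC h2 := BC_anti' hext23 hx3
      have hxZ : x ∈ Z := by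
        by_contra hxZ
        exact hx2 ⟨hxBC2, hxZ⟩
      exact ⟨⟨hxZ, fun hmem => hxX hmem.1⟩, BC_anti' b2 hxBC2⟩
    · -- incompatible: BC h2 ∩ BC h0 = ∅
      push_neg at hcompat
      obtain ⟨A, b, hAb, hA0ne, hA0b⟩ := hcompat
      have hA0 : h0 A = some (!b) := by
        cases hc : h0 A with
        | none => exact absurd hc hA0ne
        | some c =>
          cases b <;> cases c <;> simp_all
      have hdisjBC : ∀ x, x ∈ BC h2 → x ∉ BC h0 := by
        intro x hx2' hx0'
        rw [mem_BC'] at hx2' hx0'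
        have e2 := hx2' A (by simp [hAb])
        have e0 := hx0' A (by simp [hA0])
        rw [hAb] at e2
        rw [hA0] at e0
        cases b <;> simp_all
      have hinf : (BC h2 \ (BC h2 \ Z)).Infinite := (BC_infinite' hI a2).diff c2
      refine hinf.mono ?_
      rintro x ⟨hx2', hxd⟩
      have hxZ : x ∈ Z := by
        by_contra hxZ
        exact hxd ⟨hx2', hxZ⟩
      exact ⟨⟨hxZ, fun hmem => hdisjBC x hx2' hmem.2⟩, BC_anti' b2 hx2'⟩
  have hGproper : ProperFilter G := by
    refine ⟨?_, ?_, ?_, ?_⟩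
    · rintro ⟨Z, hZ, hsub⟩
      have := key Z hZ h0 hFF0
      exact this (Set.Finite.subset (Set.finite_empty) (fun x hx => hsub hx.1))
    · exact ⟨Set.univ, (densityFil_proper' hI).2.1, Set.subset_univ _⟩
    · rintro Y ⟨Z, hZ, hsub⟩ Y' hYY'
      exact ⟨Z, hZ, hsub.trans hYY'⟩
    · rintro Y ⟨Z1, hZ1, hsub1⟩ Y' ⟨Z2, hZ2, hsub2⟩
      refine ⟨Z1 ∩ Z2, (densityFil_proper' hI).2.2.2 Z1 hZ1 Z2 hZ2, ?_⟩
      rintro x ⟨⟨hz1, hz2⟩, hw⟩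
      exact ⟨hsub1 ⟨hz1, hw⟩, hsub2 ⟨hz2, hw⟩⟩
  have hGdiag : DiagProp I G := by
    rintro Y ⟨Z, hZ, hsub⟩ h hh
    exact (key Z hZ h hh).mono (fun x hx => ⟨hsub hx.1, hx.2⟩)
  have hGsub : densityFil I ⊆ G := fun Z hZ => ⟨Z, hZ, Set.inter_subset_left⟩
  have hGeq : G = densityFil I := hmax G hGproper hGdiag hGsub
  have hWG : W ∈ G := ⟨Set.univ, (densityFil_proper' hI).2.1, fun x hx => hx.2⟩
  rw [hGeq] at hWG
  obtain ⟨h', a', b', c'⟩ := hWG h0 hFF0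
  have hbad' := hbad h' a' b'
  apply hbad'.2
  refine c'.subset ?_
  rintro x ⟨hx1, hx2⟩
  exact ⟨hx1, fun hw => hw ⟨hx2, BC_anti' b' hx1⟩⟩

end AuxStatement6

theorem statement6 (I : Set (Set ℕ)) (hI : Indep I) :
    DenselyMax I ↔
      (DiagFilter I (densityFil I) ∧ ∀ F, DiagFilter I F → F = densityFil I) := by
  constructor
  · intro hDM
    refine ⟨⟨densityFil_proper' hI, densityFil_diag' hI,
      fun G pG dG s => Set.Subset.antisymm (sub_densityFil' hDM dG) s⟩, ?_⟩
    intro F hF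
    have h1 : F ⊆ densityFil I := sub_densityFil' hDM hF.2.1
    exact (hF.2.2 (densityFil I) (densityFil_proper' hI) (densityFil_diag' hI) h1).symm
  · rintro ⟨⟨_, _, hmax⟩, -⟩
    exact denselyMax_of_max' hI hmax
end
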